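/- For θ ∈ (0, π/2] define the tetrahedral-type POVM on ℂ²: α₁ = (1/4)(I + sqrt(1−ε²)Y + εZ), α₂ = (1/4)(I + sqrt(1−ε²)Y − εZ), α₃ = (1/4)(I − sqrt(1−ε²)Y + εX), α₄ = (1/4)(I − sqrt(1−ε²)Y − εX) for ε ∈ (0,1], and the three-outcome POVM β₁, β₂, β₃ from the modified Mercedes-Benz construction (λ₁ = 2/(3+3cos θ), λ₂ = λ₃ = (2+3cos θ)/(3+3cos θ), μ = 1/(2+3cos θ)). Then the joint probabilities P(a,b) = ⟨ψ_θ| α_a ⊗ β_b |ψ_θ⟩ converge to 1/12 for every (a,b) as ε → 0. -/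

import Mathlib

open Matrix Kronecker

noncomputable def PauliX : Matrix (Fin 2) (Fin 2) ℂ := !![0, 1; 1, 0]
noncomputable def PauliY : Matrix (Fin 2) (Fin 2) ℂ := !![0, -Complex.I; Complex.I, 0]
noncomputable def PauliZ : Matrix (Fin 2) (Fin 2) ℂ := !![1, 0; 0, -1]

noncomputable def ketPsi (θ : ℝ) : Fin 2 × Fin 2 → ℂ := fun p =>
  if p = (0, 0) then (Real.cos (θ / 2) : ℂ)
  else if p = (1, 1) then (Real.sin (θ / 2) : ℂ) else 0

noncomputable def psiProj (θ : ℝ) : Matrix (Fin 2 × Fin 2) (Fin 2 × Fin 2) ℂ :=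
  vecMulVec (ketPsi θ) (star (ketPsi θ))

/-- Alice's perturbed tetrahedral POVM, with parameter `ε`. -/
noncomputable def alphaE (ε : ℝ) : Fin 4 → Matrix (Fin 2) (Fin 2) ℂ :=
  ![(1 / 4 : ℂ) • ((1 : Matrix (Fin 2) (Fin 2) ℂ)
      + (Real.sqrt (1 - ε ^ 2) : ℂ) • PauliY + (ε : ℂ) • PauliZ),
    (1 / 4 : ℂ) • ((1 : Matrix (Fin 2) (Fin 2) ℂ)
      + (Real.sqrt (1 - ε ^ 2) : ℂ) • PauliY - (ε : ℂ) • PauliZ),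
    (1 / 4 : ℂ) • ((1 : Matrix (Fin 2) (Fin 2) ℂ)
      - (Real.sqrt (1 - ε ^ 2) : ℂ) • PauliY + (ε : ℂ) • PauliX),
    (1 / 4 : ℂ) • ((1 : Matrix (Fin 2) (Fin 2) ℂ)
      - (Real.sqrt (1 - ε ^ 2) : ℂ) • PauliY - (ε : ℂ) • PauliX)]

noncomputable def lamB1 (θ : ℝ) : ℝ := 2 / (3 + 3 * Real.cos θ)
noncomputable def lamB2 (θ : ℝ) : ℝ := (2 + 3 * Real.cos θ) / (3 + 3 * Real.cos θ)
noncomputable def muB (θ : ℝ) : ℝ := 1 / (2 + 3 * Real.cos θ)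

/-- Bob's modified Mercedes-Benz POVM. -/
noncomputable def betaB (θ : ℝ) : Fin 3 → Matrix (Fin 2) (Fin 2) ℂ := fun b =>
  if b = 0 then ((lamB1 θ / 2 : ℝ) : ℂ) • ((1 : Matrix (Fin 2) (Fin 2) ℂ) + PauliZ)
  else if b = 1 then ((lamB2 θ / 2 : ℝ) : ℂ) •
    ((1 : Matrix (Fin 2) (Fin 2) ℂ) - (muB θ : ℂ) • PauliZ
      + (Real.sqrt (1 - muB θ ^ 2) : ℂ) • PauliX)
  else ((lamB2 θ / 2 : ℝ) : ℂ) •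
    ((1 : Matrix (Fin 2) (Fin 2) ℂ) - (muB θ : ℂ) • PauliZ
      - (Real.sqrt (1 - muB θ ^ 2) : ℂ) • PauliX)

set_option maxHeartbeats 2000000 in
/-- The joint probabilities `P(a,b) = ⟨ψ_θ| α_a ⊗ β_b |ψ_θ⟩` tend to `1/12`
for every outcome pair as `ε → 0⁺`. -/
theorem joint_probs_tendsto_one_twelfth (θ : ℝ) (h1 : 0 < θ) (h2 : θ ≤ Real.pi / 2)
    (a : Fin 4) (b : Fin 3) :
    Filter.Tendsto (fun ε : ℝ => ((alphaE ε a ⊗ₖ betaB θ b) * psiProj θ).trace)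
      (nhdsWithin 0 (Set.Ioi 0)) (nhds ((1 / 12 : ℂ))) := by
  have key : (fun ε : ℝ => ((alphaE ε a ⊗ₖ betaB θ b) * psiProj θ).trace) =
      fun ε : ℝ => ∑ i : Fin 2 × Fin 2, ∑ j : Fin 2 × Fin 2,
        (alphaE ε a i.1 j.1 * betaB θ b i.2 j.2) * (ketPsi θ j * (starRingEnd ℂ) (ketPsi θ i)) := by
    funext ε
    simp [Matrix.trace, Matrix.mul_apply, psiProj, Matrix.vecMulVec_apply, kroneckerMap_apply,
      Finset.mul_sum, mul_comm, mul_assoc]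
  rw [key]
  fin_cases a <;> fin_cases b <;>
    (simp only [Fintype.sum_prod_type, Fin.sum_univ_two]
     simp only [ketPsi, Prod.mk.injEq, if_true, if_false, reduceIte, Prod.ext_iff]
     simp [alphaE, betaB, PauliX, PauliY, PauliZ, Matrix.one_apply])
  all_goals
    have hθ2 : ((θ:ℂ)/2) = ((θ/2:ℝ):ℂ) := by push_cast; ring
    simp only [hθ2, ← Complex.ofReal_cos, ← Complex.ofReal_sin, Complex.conj_ofReal]
    try refine (Continuous.tendsto' (by fun_prop) 0 _ ?_).mono_left nhdsWithin_le_nhds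
    have hc : (0:ℝ) ≤ Real.cos θ := Real.cos_nonneg_of_mem_Icc ⟨by linarith [Real.pi_pos], h2⟩
    have hc2 : Real.cos (θ/2)^2 = 1/2 + Real.cos θ/2 := by
      rw [Real.cos_sq]; norm_num [mul_div_cancel₀]
    have hs2 : Real.sin (θ/2)^2 = 1/2 - Real.cos θ/2 := by
      have := Real.sin_sq_add_cos_sq (θ/2); linarith
    have ec1 : ((Real.cos (θ/2) : ℂ)) * ((Real.cos (θ/2) : ℂ))
        = 1/2 + ((Real.cos θ : ℂ))/2 := by
      rw [← Complex.ofReal_mul, show Real.cos (θ/2) * Real.cos (θ/2) = 1/2 + Real.cos θ/2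
        by rw [← sq]; exact hc2]
      simp only [Complex.ofReal_add, Complex.ofReal_div, Complex.ofReal_one,
        Complex.ofReal_ofNat]
    have es1 : ((Real.sin (θ/2) : ℂ)) * ((Real.sin (θ/2) : ℂ))
        = 1/2 - ((Real.cos θ : ℂ))/2 := by
      rw [← Complex.ofReal_mul, show Real.sin (θ/2) * Real.sin (θ/2) = 1/2 - Real.cos θ/2
        by rw [← sq]; exact hs2]
      simp only [Complex.ofReal_sub, Complex.ofReal_div, Complex.ofReal_one,
        Complex.ofReal_ofNat]
    have h3' : ((3:ℂ) + 3 * Complex.cos θ) ≠ 0 := by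
      have : ((3 + 3 * Real.cos θ : ℝ) : ℂ) ≠ 0 :=
        Complex.ofReal_ne_zero.mpr (by positivity)
      push_cast at this; exact this
    have h23' : ((2:ℂ) + 3 * Complex.cos θ) ≠ 0 := by
      have : ((2 + 3 * Real.cos θ : ℝ) : ℂ) ≠ 0 :=
        Complex.ofReal_ne_zero.mpr (by positivity)
      push_cast at this; exact this
    norm_num [Real.sqrt_one]
    simp only [hθ2, ← Complex.ofReal_cos, ← Complex.ofReal_sin]
    simp only [ec1, es1]
    simp only [lamB1, lamB2, muB, Complex.ofReal_div, Complex.ofReal_add,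
      Complex.ofReal_mul, Complex.ofReal_one, Complex.ofReal_ofNat]
    have h1c : (1 + (Real.cos θ : ℂ)) ≠ 0 := by
      have : ((1 + Real.cos θ : ℝ) : ℂ) ≠ 0 :=
        Complex.ofReal_ne_zero.mpr (ne_of_gt (by linarith))
      rwa [Complex.ofReal_add, Complex.ofReal_one] at this
    field_simp [h3', h23', mul_ne_zero h3' h23', h1c]
    try ring1
    try (
      have hD : (4 * ((3 + 3 * Complex.cos (θ:ℂ)) * 2 * (2 + 3 * Complex.cos (θ:ℂ))) : ℂ) ≠ 0 :=
        mul_ne_zero (by norm_num) (mul_ne_zero (mul_ne_zero h3' (by norm_num)) h23')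
      have hT : ∀ x : ℂ,
          x * (4 * ((3 + 3 * Complex.cos (θ:ℂ)) * 2 * (2 + 3 * Complex.cos (θ:ℂ)))) /
            (4 * ((3 + 3 * Complex.cos (θ:ℂ)) * 2 * (2 + 3 * Complex.cos (θ:ℂ))) * 2) = x / 2 :=
        fun x => by
          rw [div_eq_div_iff (mul_ne_zero hD (by norm_num)) (by norm_num : (2:ℂ) ≠ 0)]; ring
      rw [hT, hT]
      ring)
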